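/- arXiv:2512.16872 — 5 statements merged into one kernel-verified Lean document; each statement's English description precedes it below -/
import Mathlib

section
/- Let F : 𝕋 → 𝕋 be an input-dominated, causal function on spike trains satisfying the monotone scaling property, identified with the set F(ℕ) ⊆ ℕ. If F is m-finite, i.e., F(ℕ) ⊆ [m], then F has (m+1)-Markovian memory: for all t ∈ ℕ, t ∈ F(ℕ) if and only if t ∈ F((t−(m+1), t] ∩ ℕ). -/
/-- A spike train: a subset of `(0,∞)` that is locally finite. -/
def SpikeTrain (I : Set ℝ) : Prop :=
  I ⊆ Set.Ioi 0 ∧ ∀ t > (0 : ℝ), (I ∩ Set.Icc 0 t).Finite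

/-- The positive natural numbers, viewed as a spike train in `ℝ`. -/
def posNats : Set ℝ := {x | ∃ n : ℕ, 0 < n ∧ x = n}

/-- The naturals `{1, …, m}`, viewed as a spike train in `ℝ`. -/
def natsUpTo (m : ℕ) : Set ℝ := {x | ∃ n : ℕ, 0 < n ∧ n ≤ m ∧ x = n}

/-- Input domination: an output spike only occurs at an input spike. -/
def Dominated (F : Set ℝ → Set ℝ) : Prop :=
  ∀ I, SpikeTrain I → F I ⊆ I

/-- Causality: the output up to time `t` depends only on the input up to time `t`. -/
def Causal (F : Set ℝ → Set ℝ) : Prop :=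
  ∀ I, SpikeTrain I → ∀ t > (0 : ℝ),
    F I ∩ Set.Icc 0 t = F (I ∩ Set.Icc 0 t) ∩ Set.Icc 0 t

/-- Monotone scaling: equivariance under strictly increasing bijections of `(0,∞)`. -/
def MonoScaling (F : Set ℝ → Set ℝ) : Prop :=
  ∀ φ : ℝ → ℝ, StrictMonoOn φ (Set.Ioi 0) → Set.BijOn φ (Set.Ioi 0) (Set.Ioi 0) →
    ∀ I, SpikeTrain I → F (φ '' I) = φ '' F I

lemma st_posNats : SpikeTrain posNats := by
  constructor
  · rintro x ⟨n, hn, rfl⟩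
    simpa using hn
  · intro t ht
    apply Set.Finite.subset (Set.Finite.image (Nat.cast : ℕ → ℝ) (Set.finite_Icc 0 ⌈t⌉₊))
    rintro x ⟨⟨n, hn, rfl⟩, h0, hle⟩
    exact ⟨n, ⟨Nat.zero_le n, by simpa using Nat.ceil_le_ceil hle⟩, rfl⟩

lemma st_natsUpTo (k : ℕ) : SpikeTrain (natsUpTo k) := by
  constructor
  · rintro x ⟨n, hn, _, rfl⟩
    simpa using hn
  · intro t ht
    apply Set.Finite.subset (Set.Finite.image (Nat.cast : ℕ → ℝ) (Set.finite_Icc 0 k))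
    rintro x ⟨⟨n, hn, hnk, rfl⟩, _⟩
    exact ⟨n, ⟨Nat.zero_le n, hnk⟩, rfl⟩

lemma posNats_inter (k : ℕ) : posNats ∩ Set.Icc 0 (k : ℝ) = natsUpTo k := by
  ext x
  constructor
  · rintro ⟨⟨n, hn, rfl⟩, _, hle⟩
    exact ⟨n, hn, by exact_mod_cast hle, rfl⟩
  · rintro ⟨n, hn, hnk, rfl⟩
    exact ⟨⟨n, hn, rfl⟩, by positivity, by exact_mod_cast hnk⟩

lemma causal_nat (F : Set ℝ → Set ℝ) (hcaus : Causal F) (k : ℕ) (hk : 0 < k) :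
    ((k : ℝ) ∈ F posNats ↔ (k : ℝ) ∈ F (natsUpTo k)) := by
  have h := hcaus posNats st_posNats (k : ℝ) (by exact_mod_cast hk)
  rw [posNats_inter] at h
  have hkmem : (k : ℝ) ∈ Set.Icc (0:ℝ) k := ⟨by positivity, le_refl _⟩
  constructor
  · intro hF
    have : (k:ℝ) ∈ F posNats ∩ Set.Icc 0 (k:ℝ) := ⟨hF, hkmem⟩
    rw [h] at this
    exact this.1
  · intro hF
    have : (k:ℝ) ∈ F (natsUpTo k) ∩ Set.Icc 0 (k:ℝ) := ⟨hF, hkmem⟩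
    rw [← h] at this
    exact this.1


noncomputable def scaleShift (c : ℝ) : ℝ → ℝ := fun x => if x ≤ 1 then (c+1)*x else x + c

lemma scaleShift_mono {c : ℝ} (hc : 0 < c) : StrictMonoOn (scaleShift c) (Set.Ioi 0) := by
  intro x hx y hy hxy
  simp only [Set.mem_Ioi] at hx hy
  unfold scaleShift
  by_cases h1 : x ≤ 1 <;> by_cases h2 : y ≤ 1 <;>
    simp only [h1, h2, if_true, if_false] <;> nlinarith

lemma scaleShift_bij {c : ℝ} (hc : 0 < c) :
    Set.BijOn (scaleShift c) (Set.Ioi 0) (Set.Ioi 0) := by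
  refine ⟨?_, (scaleShift_mono hc).injOn, ?_⟩
  · intro x hx
    simp only [Set.mem_Ioi] at *
    unfold scaleShift
    by_cases h : x ≤ 1 <;> simp only [h, if_true, if_false] <;> nlinarith
  · intro y hy
    simp only [Set.mem_Ioi] at hy
    by_cases h : y ≤ c + 1
    · refine ⟨y/(c+1), by simp only [Set.mem_Ioi]; positivity, ?_⟩
      have hle : y/(c+1) ≤ 1 := by rw [div_le_one (by linarith)]; exact h
      unfold scaleShift
      simp only [hle, if_true]
      field_simp
    · push_neg at h
      refine ⟨y - c, by simp only [Set.mem_Ioi]; linarith, ?_⟩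
      have hnle : ¬ (y - c ≤ 1) := by linarith
      unfold scaleShift
      simp only [hnle, if_false]
      ring

lemma scaleShift_nat {c : ℝ} (n : ℕ) (hn : 1 ≤ n) :
    scaleShift c (n : ℝ) = n + c := by
  unfold scaleShift
  by_cases h : (n:ℝ) ≤ 1
  · have hn1 : n = 1 := le_antisymm (by exact_mod_cast h) hn
    subst hn1
    simp only [Nat.cast_one, le_refl, if_true, mul_one]
    ring
  · simp only [h, if_false]


/-- If an input-dominated, causal, monotone-scaling `F` is `m`-finite
(`F(ℕ) ⊆ [m]`), then `F` has `(m+1)`-Markovian memory. -/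
theorem mFinite_implies_markovian (F : Set ℝ → Set ℝ) (m : ℕ) (hm : 0 < m)
    (hdom : Dominated F) (hcaus : Causal F) (hms : MonoScaling F)
    (hfin : F posNats ⊆ natsUpTo m) :
    ∀ t : ℕ, 0 < t →
      ((t : ℝ) ∈ F posNats ↔
        (t : ℝ) ∈ F (posNats ∩ Set.Ioc ((t : ℝ) - (m + 1)) t)) := by
  intro t ht
  by_cases hcase : t ≤ m + 1
  · have hset : posNats ∩ Set.Ioc ((t:ℝ) - (m+1)) t = natsUpTo t := by
      ext x
      constructor
      · rintro ⟨⟨n, hn, rfl⟩, _, hle⟩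
        exact ⟨n, hn, by exact_mod_cast hle, rfl⟩
      · rintro ⟨n, hn, hnk, rfl⟩
        refine ⟨⟨n, hn, rfl⟩, ?_, by exact_mod_cast hnk⟩
        have h1 : (1:ℝ) ≤ n := by exact_mod_cast hn
        have h2 : (t:ℝ) ≤ m + 1 := by exact_mod_cast hcase
        linarith
    rw [hset]
    exact causal_nat F hcaus t ht
  · push_neg at hcase
    have htm : m + 2 ≤ t := hcase
    have hc1 : (1:ℝ) ≤ (t:ℝ) - (m+1) := by
      have h2 : ((m:ℝ) + 2) ≤ t := by exact_mod_cast htm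
      linarith
    have hc0 : (0:ℝ) < (t:ℝ) - (m+1) := by linarith
    have hcastsub : (((t - (m+1) : ℕ)) : ℝ) = (t:ℝ) - (m+1) := by
      rw [Nat.cast_sub (by omega)]
      push_cast
      ring
    have himg : scaleShift ((t:ℝ) - (m+1)) '' natsUpTo (m+1)
        = posNats ∩ Set.Ioc ((t:ℝ) - (m+1)) t := by
      ext x
      constructor
      · rintro ⟨_, ⟨n, hn, hnm, rfl⟩, rfl⟩
        rw [scaleShift_nat n hn]
        have hn1 : (1:ℝ) ≤ n := by exact_mod_cast hn
        have hnm' : (n:ℝ) ≤ m + 1 := by exact_mod_cast hnm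
        refine ⟨⟨n + (t - (m+1)), by omega, ?_⟩, by constructor <;> linarith⟩
        push_cast
        rw [hcastsub]
      · rintro ⟨⟨k, hk, rfl⟩, hlo, hhi⟩
        have hk_le : k ≤ t := by exact_mod_cast hhi
        have hk_lo : t - m ≤ k := by
          by_contra hcon
          push_neg at hcon
          have h1 : k + (m+1) ≤ t := by omega
          have h2 : (k:ℝ) + (m+1) ≤ t := by exact_mod_cast h1
          linarith
        refine ⟨((k - (t - (m+1)) : ℕ) : ℝ), ⟨k - (t - (m+1)), by omega, by omega, rfl⟩, ?_⟩
        rw [scaleShift_nat _ (by omega)]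
        rw [Nat.cast_sub (by omega), hcastsub]
        ring
    rw [← himg, hms _ (scaleShift_mono hc0) (scaleShift_bij hc0)
      (natsUpTo (m+1)) (st_natsUpTo (m+1))]
    constructor
    · intro hF
      exfalso
      obtain ⟨n, hn, hnm, heq⟩ := hfin hF
      have : t = n := by exact_mod_cast heq
      omega
    · rintro ⟨s, hs, hφs⟩
      exfalso
      obtain ⟨n, hn, hnm, rfl⟩ := hdom _ (st_natsUpTo (m+1)) hs
      rw [scaleShift_nat n hn] at hφs
      have hn_eq : n = m + 1 := by
        have h1 : (n:ℝ) = m + 1 := by linarith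
        exact_mod_cast h1
      subst hn_eq
      have hmem : ((m+1:ℕ):ℝ) ∈ F posNats :=
        (causal_nat F hcaus (m+1) (by omega)).mpr (by push_cast at hs ⊢; exact hs)
      obtain ⟨j, hj, hjm, hje⟩ := hfin hmem
      have : (m+1:ℕ) = j := by exact_mod_cast hje
      omega
end

section
/- Let F : 𝕋 → 𝕋 be input-dominated, causal, and satisfy the monotone scaling property, and suppose F has (m+1)-Markovian memory. Then either F(ℕ) ⊆ [m] (F is m-finite) or ℕ \ F(ℕ) ⊆ [m] (the complement function is m-finite). -/
namespace MarkovAux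

lemma spike_posNats : SpikeTrain posNats := by
  constructor
  · rintro x ⟨n, hn, rfl⟩
    simp only [Set.mem_Ioi]
    exact_mod_cast hn
  · intro t _
    apply Set.Finite.subset ((Set.finite_Iic (⌈t⌉₊)).image (Nat.cast : ℕ → ℝ))
    rintro x ⟨⟨n, _, rfl⟩, _, hle⟩
    refine ⟨n, ?_, rfl⟩
    have h1 : (n : ℝ) ≤ (⌈t⌉₊ : ℝ) := hle.trans (Nat.le_ceil t)
    exact_mod_cast h1

lemma spike_natsUpTo (k : ℕ) : SpikeTrain (natsUpTo k) := by
  constructor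
  · rintro x ⟨n, hn, _, rfl⟩
    simp only [Set.mem_Ioi]
    exact_mod_cast hn
  · intro t _
    apply Set.Finite.subset ((Set.finite_Iic k).image (Nat.cast : ℕ → ℝ))
    rintro x ⟨⟨n, _, hnk, rfl⟩, _⟩
    exact ⟨n, hnk, rfl⟩

end MarkovAux

/-- If an input-dominated, causal, monotone-scaling `F` has `(m+1)`-Markovian
memory, then either `F` or its input-wise complement is `m`-finite. -/
theorem markovian_implies_mFinite_or_complement (F : Set ℝ → Set ℝ) (m : ℕ)
    (hm : 0 < m) (hdom : Dominated F) (hcaus : Causal F) (hms : MonoScaling F)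
    (hmarkov : ∀ t : ℕ, 0 < t →
      ((t : ℝ) ∈ F posNats ↔
        (t : ℝ) ∈ F (posNats ∩ Set.Ioc ((t : ℝ) - (m + 1)) t))) :
    F posNats ⊆ natsUpTo m ∨ posNats \ F posNats ⊆ natsUpTo m := by
  classical
  -- Key claim: for every natural t > m,
  -- (t : ℝ) ∈ F posNats ↔ ((m+1 : ℕ) : ℝ) ∈ F (natsUpTo (m+1))
  have key : ∀ t : ℕ, m < t →
      ((t : ℝ) ∈ F posNats ↔ ((m : ℝ) + 1) ∈ F (natsUpTo (m + 1))) := by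
    intro t ht
    have htpos : 0 < t := lt_of_le_of_lt (Nat.zero_le m) ht
    have htm1 : (m : ℝ) + 1 ≤ (t : ℝ) := by exact_mod_cast Nat.succ_le_of_lt ht
    -- the scaling map
    set a : ℝ := (t : ℝ) - m with ha_def
    have ha : 1 ≤ a := by simp only [ha_def]; linarith
    have ha0 : 0 < a := lt_of_lt_of_le one_pos ha
    set c : ℝ := a - 1 with hc_def
    have hc0 : 0 ≤ c := by simp only [hc_def]; linarith
    have hct : c = (t : ℝ) - (m + 1) := by simp only [hc_def, ha_def]; ring
    set φ : ℝ → ℝ := fun x => min (a * x) (x + c) with hφ_def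
    have hmono : StrictMono φ := by
      intro x y hxy
      exact lt_min ((min_le_left _ _).trans_lt (by nlinarith))
        ((min_le_right _ _).trans_lt (by linarith))
    have hmonoOn : StrictMonoOn φ (Set.Ioi 0) := hmono.strictMonoOn _
    -- φ fixes x ≥ 1 up to adding c
    have hφ_ge1 : ∀ x : ℝ, 1 ≤ x → φ x = x + c := by
      intro x hx
      simp only [hφ_def]
      apply min_eq_right
      nlinarith
    have hmaps : Set.MapsTo φ (Set.Ioi 0) (Set.Ioi 0) := by
      intro x hx
      simp only [Set.mem_Ioi] at hx ⊢
      exact lt_min (by positivity) (by linarith)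
    have hsurj : Set.SurjOn φ (Set.Ioi 0) (Set.Ioi 0) := by
      intro y hy
      simp only [Set.mem_Ioi] at hy
      refine ⟨max (y / a) (y - c), ?_, ?_⟩
      · simp only [Set.mem_Ioi]
        exact lt_max_iff.mpr (Or.inl (by positivity))
      · rcases le_total y a with h | h
        · have h1 : y - c ≤ y / a := by
            rw [le_div_iff₀ ha0]; nlinarith
          rw [max_eq_left h1]
          show min (a * (y / a)) (y / a + c) = y
          rw [mul_div_cancel₀ _ (ne_of_gt ha0)]
          exact min_eq_left (by linarith)
        · have h1 : y / a ≤ y - c := by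
            rw [div_le_iff₀ ha0]; nlinarith
          rw [max_eq_right h1]
          show min (a * (y - c)) ((y - c) + c) = y
          rw [min_eq_right (by nlinarith)]
          ring
    have hbij : Set.BijOn φ (Set.Ioi 0) (Set.Ioi 0) :=
      ⟨hmaps, hmono.injective.injOn, hsurj⟩
    -- the image identity
    have himg : φ '' natsUpTo (m + 1) = posNats ∩ Set.Ioc ((t : ℝ) - (m + 1)) t := by
      ext x
      constructor
      · rintro ⟨y, ⟨n, hn0, hnm, rfl⟩, rfl⟩
        have hn1 : (1 : ℝ) ≤ n := by exact_mod_cast hn0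
        rw [hφ_ge1 _ hn1]
        have hk : ∃ k : ℕ, ((n : ℝ) + c) = k ∧ 0 < k := by
          refine ⟨n + (t - (m + 1)), ?_, Nat.add_pos_left hn0 _⟩
          have : ((t : ℕ) : ℝ) - (m + 1) = ((t - (m+1) : ℕ) : ℝ) := by
            rw [Nat.cast_sub (Nat.succ_le_of_lt ht)]
            push_cast; ring
          rw [hct, this]
          push_cast; ring
        obtain ⟨k, hk, hkpos⟩ := hk
        refine ⟨⟨k, hkpos, hk ▸ rfl⟩, ?_, ?_⟩
        · rw [← hct]; simp only [lt_add_iff_pos_left] at *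
          linarith [hn1]
        · rw [hct]
          have hnm' : (n : ℝ) ≤ m + 1 := by exact_mod_cast hnm
          linarith
      · rintro ⟨⟨n, hn0, rfl⟩, hlo, hhi⟩
        have hnm1 : n ≤ t := by exact_mod_cast hhi
        have hlo' : (t : ℝ) - (m + 1) < n := hlo
        -- k := n - (t - (m+1))
        have hkle : t - (m + 1) < n := by
          by_contra hcon
          push_neg at hcon
          have : (n : ℝ) ≤ (t : ℝ) - (m + 1) := by
            have := Nat.cast_le (α := ℝ) |>.mpr hcon
            rw [Nat.cast_sub (Nat.succ_le_of_lt ht)] at this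
            push_cast at this; linarith
          linarith
        set k : ℕ := n - (t - (m + 1)) with hk_def
        have hk1 : 1 ≤ k := Nat.le_sub_of_add_le (by omega)
        have hkm : k ≤ m + 1 := by omega
        have hkval : (k : ℝ) = (n : ℝ) - c := by
          rw [hct, hk_def, Nat.cast_sub (le_of_lt hkle), Nat.cast_sub (Nat.succ_le_of_lt ht)]
          push_cast; ring
        refine ⟨(k : ℝ), ⟨k, hk1, hkm, rfl⟩, ?_⟩
        rw [hφ_ge1 _ (by exact_mod_cast hk1), hkval]
        ring
    -- apply monotone scaling
    have hscale := hms φ hmonoOn hbij (natsUpTo (m + 1)) (MarkovAux.spike_natsUpTo (m + 1))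
    rw [hmarkov t htpos, ← himg, hscale]
    -- (t:ℝ) ∈ φ '' F (natsUpTo (m+1)) ↔ (m+1 : ℝ) ∈ F (natsUpTo (m+1))
    have hsub : F (natsUpTo (m + 1)) ⊆ natsUpTo (m + 1) :=
      hdom _ (MarkovAux.spike_natsUpTo (m + 1))
    have hφm1 : φ ((m : ℝ) + 1) = (t : ℝ) := by
      rw [hφ_ge1 _ (by linarith [Nat.cast_nonneg (α := ℝ) m]), hct]; ring
    constructor
    · rintro ⟨y, hy, hyt⟩
      obtain ⟨n, hn0, hnm, rfl⟩ := hsub hy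
      have hn1 : (1 : ℝ) ≤ n := by exact_mod_cast hn0
      rw [hφ_ge1 _ hn1, hct] at hyt
      have : (n : ℝ) = m + 1 := by linarith
      rwa [← this]
    · intro h
      exact ⟨(m : ℝ) + 1, h, hφm1⟩
  -- Case split
  by_cases hcase : ((m : ℝ) + 1) ∈ F (natsUpTo (m + 1))
  · right
    rintro x ⟨⟨n, hn0, rfl⟩, hnot⟩
    rcases le_or_gt n m with h | h
    · exact ⟨n, hn0, h, rfl⟩
    · exact absurd ((key n h).mpr hcase) hnot
  · left
    intro x hx
    obtain ⟨n, hn0, rfl⟩ := hdom _ MarkovAux.spike_posNats hx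
    rcases le_or_gt n m with h | h
    · exact ⟨n, hn0, h, rfl⟩
    · exact absurd ((key n h).mp hx) hcase
end

section
/- Unfolded membrane potential formula: with the setup of the integrate-and-fire neuron, enumerate the union I = I_1 ∪ ... ∪ I_d as τ_1 < τ_2 < ..., set τ_0 = 0, let r ≥ 1 and let j = max{ i ∈ {0,...,r−1} : P(τ_i) ∉ (0,1] }. Then P(τ_r) = ( ∑_{k=j+1}^{r} ∑_{l : τ_k ∈ I_l} w_l · exp(−(τ_r − τ_k)/h) )₊. -/
/-- The last presynaptic spike time (in `{0} ∪ I`) strictly before `t`. -/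
noncomputable def prevTime (I : Set ℝ) (t : ℝ) : ℝ :=
  sSup (({0} ∪ I) ∩ Set.Iio t)

/-- Decay factor over a time lag `Δ` with memory coefficient `h ∈ (0,∞]`. -/
noncomputable def decay (h : ENNReal) (Δ : ℝ) : ℝ :=
  Real.exp (-(Δ / h.toReal))

/-- The integrate-and-fire recursion for the membrane potential. -/
noncomputable def IsPotential (d : ℕ) (I : Fin d → Set ℝ) (w : Fin d → ℝ)
    (h : ENNReal) (P : ℝ → ℝ) : Prop :=
  (∀ t < (0 : ℝ), P t = 0) ∧ P 0 = 0 ∧ ∀ t > (0 : ℝ),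
    P t = max ((if P (prevTime (⋃ j, I j) t) ≤ 1 then
          P (prevTime (⋃ j, I j) t) * decay h (t - prevTime (⋃ j, I j) t)
        else 0)
      + ∑ j, Set.indicator (I j) (fun _ => w j) t) 0

/-- Unfolded membrane potential formula: enumerating the union of input spike
trains as `τ 1 < τ 2 < ⋯` with `τ 0 = 0`, and letting `j` be the last index
before `r` at which the potential lies outside `(0,1]`,
`P(τ r) = ( ∑_{k=j+1}^{r} (∑_{l : τ k ∈ I l} w l) · e^{−(τ r − τ k)/h} )₊`. -/
theorem potential_unfolded (d : ℕ) (I : Fin d → Set ℝ) (w : Fin d → ℝ)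
    (h : ENNReal) (hh : 0 < h)
    (hI : ∀ j, I j ⊆ Set.Ioi 0 ∧ ∀ t > (0 : ℝ), (I j ∩ Set.Icc 0 t).Finite)
    (τ : ℕ → ℝ) (hτ0 : τ 0 = 0) (hτmono : StrictMono τ)
    (hτenum : (⋃ j, I j) = {x | ∃ n : ℕ, 1 ≤ n ∧ x = τ n})
    (P : ℝ → ℝ) (hP : IsPotential d I w h P)
    (r : ℕ) (hr : 1 ≤ r)
    (j : ℕ) (hjr : j ≤ r - 1) (hj : P (τ j) ∉ Set.Ioc (0 : ℝ) 1)
    (hjmax : ∀ i, j < i → i ≤ r - 1 → P (τ i) ∈ Set.Ioc (0 : ℝ) 1) :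
    P (τ r) = max (∑ k ∈ Finset.Icc (j + 1) r,
        (∑ l, Set.indicator (I l) (fun _ => w l) (τ k)) * decay h (τ r - τ k)) 0 := by
  have hrange : ({0} : Set ℝ) ∪ (⋃ j, I j) = Set.range τ := by
    rw [hτenum]
    ext x
    simp only [Set.mem_union, Set.mem_singleton_iff, Set.mem_setOf_eq, Set.mem_range]
    constructor
    · rintro (rfl | ⟨n, _, rfl⟩)
      · exact ⟨0, hτ0⟩
      · exact ⟨n, rfl⟩
    · rintro ⟨n, rfl⟩
      rcases Nat.eq_zero_or_pos n with rfl | hn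
      · left; exact hτ0
      · right; exact ⟨n, hn, rfl⟩
  have hprev : ∀ n : ℕ, prevTime (⋃ j, I j) (τ (n + 1)) = τ n := by
    intro n
    have hg : IsGreatest ((({0} : Set ℝ) ∪ ⋃ j, I j) ∩ Set.Iio (τ (n + 1))) (τ n) := by
      constructor
      · exact ⟨hrange ▸ Set.mem_range_self n, hτmono (Nat.lt_succ_self n)⟩
      · rintro x ⟨hx, hlt⟩
        rw [hrange] at hx
        obtain ⟨m, rfl⟩ := hx
        exact hτmono.le_iff_le.mpr (Nat.lt_succ_iff.mp (hτmono.lt_iff_lt.mp hlt))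
    exact hg.csSup_eq
  have hpos : ∀ n : ℕ, 1 ≤ n → 0 < τ n := by
    intro n hn
    have := hτmono (show 0 < n by omega)
    rwa [hτ0] at this
  have hPnn : ∀ n : ℕ, 0 ≤ P (τ n) := by
    intro n
    rcases Nat.eq_zero_or_pos n with rfl | hn
    · rw [hτ0, hP.2.1]
    · rw [hP.2.2 _ (hpos n hn)]
      exact le_max_right _ 0
  have hstep : ∀ n : ℕ, P (τ (n + 1)) = max
      ((if P (τ n) ≤ 1 then P (τ n) * decay h (τ (n + 1) - τ n) else 0)
        + ∑ l, Set.indicator (I l) (fun _ => w l) (τ (n + 1))) 0 := by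
    intro n
    rw [hP.2.2 _ (hpos (n + 1) (by omega)), hprev n]
  have hdecay0 : decay h 0 = 1 := by simp [decay]
  have hdecaymul : ∀ a b : ℝ, decay h a * decay h b = decay h (a + b) := by
    intro a b
    rw [decay, decay, decay, ← Real.exp_add]
    congr 1
    ring
  have main : ∀ m : ℕ, (∀ i, j < i → i ≤ j + m → P (τ i) ∈ Set.Ioc (0 : ℝ) 1) →
      P (τ (j + 1 + m)) = max (∑ k ∈ Finset.Icc (j + 1) (j + 1 + m),
        (∑ l, Set.indicator (I l) (fun _ => w l) (τ k)) * decay h (τ (j + 1 + m) - τ k)) 0 := by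
    intro m
    induction m with
    | zero =>
      intro _
      rw [hstep j]
      have hif : (if P (τ j) ≤ 1 then P (τ j) * decay h (τ (j + 1) - τ j) else 0) = 0 := by
        rcases lt_or_ge 1 (P (τ j)) with h1 | h1
        · rw [if_neg (not_le.mpr h1)]
        · rw [if_pos h1]
          have h0 : P (τ j) = 0 := by
            rcases lt_or_ge 0 (P (τ j)) with h2 | h2
            · exact absurd ⟨h2, h1⟩ hj
            · exact le_antisymm h2 (hPnn j)
          rw [h0, zero_mul]
      rw [hif, zero_add]
      simp only [Nat.add_zero, Finset.Icc_self, Finset.sum_singleton, sub_self, hdecay0, mul_one]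
    | succ m ih =>
      intro hmax
      have ihh := ih (fun i hi hi' => hmax i hi (by omega))
      have hPm : P (τ (j + 1 + m)) ∈ Set.Ioc (0 : ℝ) 1 := hmax (j + 1 + m) (by omega) (by omega)
      set S := ∑ k ∈ Finset.Icc (j + 1) (j + 1 + m),
        (∑ l, Set.indicator (I l) (fun _ => w l) (τ k)) * decay h (τ (j + 1 + m) - τ k) with hS
      have hsum : P (τ (j + 1 + m)) = S := by
        rcases le_or_gt S 0 with hS0 | hS0
        · rw [ihh, max_eq_right hS0] at hPm ⊢
          exact absurd hPm.1 (lt_irrefl 0)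
        · rw [ihh, max_eq_left hS0.le]
      have e : j + 1 + (m + 1) = (j + 1 + m) + 1 := rfl
      rw [e, hstep (j + 1 + m), if_pos hPm.2, hsum]
      congr 1
      rw [Finset.sum_Icc_succ_top (show j + 1 ≤ (j + 1 + m) + 1 by omega), hS, Finset.sum_mul]
      congr 1
      · apply Finset.sum_congr rfl
        intro k hk
        rw [mul_assoc, hdecaymul]
        congr 2
        ring
      · rw [sub_self, hdecay0, mul_one]
  obtain ⟨m, rfl⟩ : ∃ m, r = j + 1 + m := ⟨r - (j + 1), by omega⟩
  exact main m (fun i hi hi' => hjmax i hi (by omega))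
end

section
/- Shallow SNN representation with homogeneous gaps: let h ∈ (0,∞), m ≥ 2, and let I be a spike train with exactly m spikes, gaps δ_min = min_k (I_(k) − I_(k−1)), δ_max = max_k (I_(k) − I_(k−1)) over k = 2,...,m, and q = e^{−δ_min/h}. Define A_1(w) = w and A_ℓ(w) = w + e^{−(I_(ℓ) − I_(ℓ−1))/h} A_{ℓ−1}(w) for w > 0. If δ_max − δ_min < h·log((1 − q^m)/(1 − q^{m−1})), then for every 2 ≤ j ≤ m and every w > 0 it holds A_j(w) > A_{j−1}(w); consequently for each k ∈ [m] there exists w_k > 0 with A_k(w_k) > 1 and A_j(w_k) < 1 for all j < k. -/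
set_option maxHeartbeats 1000000 in
/-- Shallow SNN representation with homogeneous gaps: if the gaps of the spike
train `τ 1 < ⋯ < τ m` satisfy `δmax − δmin < h·log((1−q^m)/(1−q^{m−1}))` with
`q = e^{−δmin/h}`, then the partial potentials `A ℓ w` are strictly increasing
in `ℓ` for every `w > 0`, and for each `k ∈ [m]` there is a weight `w k > 0`
such that `A k (w k) > 1` while `A j (w k) < 1` for all `j < k`. -/
theorem shallow_snn_homogeneous_gaps (h : ℝ) (hh : 0 < h) (m : ℕ) (hm : 2 ≤ m)
    (τ : ℕ → ℝ) (hτ : StrictMonoOn τ (Set.Icc 1 m))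
    (δmin δmax : ℝ)
    (hδmin : IsLeast {x : ℝ | ∃ k, 2 ≤ k ∧ k ≤ m ∧ x = τ k - τ (k - 1)} δmin)
    (hδmax : IsGreatest {x : ℝ | ∃ k, 2 ≤ k ∧ k ≤ m ∧ x = τ k - τ (k - 1)} δmax)
    (q : ℝ) (hq : q = Real.exp (-δmin / h))
    (A : ℕ → ℝ → ℝ)
    (hA1 : ∀ w : ℝ, A 1 w = w)
    (hAstep : ∀ ℓ, 2 ≤ ℓ → ∀ w : ℝ,
      A ℓ w = w + Real.exp (-(τ ℓ - τ (ℓ - 1)) / h) * A (ℓ - 1) w)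
    (hgap : δmax - δmin < h * Real.log ((1 - q ^ m) / (1 - q ^ (m - 1)))) :
    (∀ j, 2 ≤ j → j ≤ m → ∀ w : ℝ, 0 < w → A (j - 1) w < A j w) ∧
    (∀ k, 1 ≤ k → k ≤ m → ∃ w : ℝ, 0 < w ∧ 1 < A k w ∧
      ∀ j, 1 ≤ j → j < k → A j w < 1) := by
  obtain ⟨⟨k0, hk02, hk0m, hk0eq⟩, hminlb⟩ := hδmin
  obtain ⟨⟨k1, hk12, hk1m, hk1eq⟩, hmaxub⟩ := hδmax
  -- gaps are positive
  have hτlt : ∀ k, 2 ≤ k → k ≤ m → τ (k - 1) < τ k := by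
    intro k h2 hkm
    exact hτ ⟨by omega, by omega⟩ ⟨by omega, hkm⟩ (by omega)
  have hδminpos : 0 < δmin := by
    rw [hk0eq]; have := hτlt k0 hk02 hk0m; linarith
  have hgapmem : ∀ ℓ, 2 ≤ ℓ → ℓ ≤ m →
      δmin ≤ τ ℓ - τ (ℓ - 1) ∧ τ ℓ - τ (ℓ - 1) ≤ δmax := by
    intro ℓ h2 hℓm
    exact ⟨hminlb ⟨ℓ, h2, hℓm, rfl⟩, hmaxub ⟨ℓ, h2, hℓm, rfl⟩⟩
  have hδmaxmin : δmin ≤ δmax := by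
    rw [hk1eq]; exact hminlb ⟨k1, hk12, hk1m, rfl⟩
  have hδmaxpos : 0 < δmax := lt_of_lt_of_le hδminpos hδmaxmin
  have hq0 : 0 < q := by rw [hq]; exact Real.exp_pos _
  have hq1 : q < 1 := by
    rw [hq]
    have : -δmin / h < 0 := div_neg_of_neg_of_pos (by linarith) hh
    calc Real.exp (-δmin / h) < Real.exp 0 := Real.exp_lt_exp.mpr this
      _ = 1 := Real.exp_zero
  have hqm : q ^ m < 1 := pow_lt_one₀ hq0.le hq1 (by omega)
  have hqm1 : q ^ (m - 1) < 1 := pow_lt_one₀ hq0.le hq1 (by omega)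
  set S : ℝ := ∑ i ∈ Finset.range m, q ^ i with hSdef
  set r : ℝ := Real.exp (-(δmax - δmin) / h) with hrdef
  have hrpos : 0 < r := Real.exp_pos _
  -- the key inequality (1 - e^{-δmax/h}) * S < 1
  have hemaxeq : Real.exp (-δmax / h) = q * r := by
    rw [hq, hrdef, ← Real.exp_add]; congr 1; ring
  have hSval : S * (1 - q) = 1 - q ^ m := by
    have hne : q - 1 ≠ 0 := by linarith
    rw [hSdef, geom_sum_eq hq1.ne m]
    field_simp
    ring
  have hqpow : q * q ^ (m - 1) = q ^ m := by
    have hm1 : m - 1 + 1 = m := by omega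
    calc q * q ^ (m - 1) = q ^ (m - 1) * q := mul_comm _ _
      _ = q ^ (m - 1 + 1) := (pow_succ q (m - 1)).symm
      _ = q ^ m := by rw [hm1]
  have hr : 1 - q ^ (m - 1) < r * (1 - q ^ m) := by
    have hR : (0:ℝ) < (1 - q ^ m) / (1 - q ^ (m - 1)) :=
      div_pos (by linarith) (by linarith)
    have hlog : (δmax - δmin) / h < Real.log ((1 - q ^ m) / (1 - q ^ (m - 1))) := by
      rw [div_lt_iff₀ hh]; linarith
    have hexp : Real.exp ((δmax - δmin) / h) < (1 - q ^ m) / (1 - q ^ (m - 1)) := by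
      calc Real.exp ((δmax - δmin) / h)
          < Real.exp (Real.log ((1 - q ^ m) / (1 - q ^ (m - 1)))) := Real.exp_lt_exp.mpr hlog
        _ = (1 - q ^ m) / (1 - q ^ (m - 1)) := Real.exp_log hR
    set t : ℝ := Real.exp ((δmax - δmin) / h) with htdef
    have ht : 0 < t := Real.exp_pos _
    have h2 : t * (1 - q ^ (m - 1)) < 1 - q ^ m :=
      (lt_div_iff₀ (by linarith : (0:ℝ) < 1 - q ^ (m - 1))).1 hexp
    have hrt : r = t⁻¹ := by rw [hrdef, htdef, neg_div, Real.exp_neg]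
    have h3 : 1 - q ^ (m - 1) = t⁻¹ * (t * (1 - q ^ (m - 1))) := by field_simp
    rw [h3, hrt]
    exact mul_lt_mul_of_pos_left h2 (inv_pos.2 ht)
  have hK : (1 - Real.exp (-δmax / h)) * S < 1 := by
    rw [hemaxeq]
    have h1q : (0:ℝ) < 1 - q := by linarith
    rw [← mul_lt_mul_iff_left₀ h1q]
    have key' : q * (1 - q ^ (m - 1)) < q * r * (1 - q ^ m) := by
      nlinarith [mul_lt_mul_of_pos_left hr hq0]
    have expand : (1 - q * r) * S * (1 - q) = S * (1 - q) - q * r * (S * (1 - q)) := by ring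
    rw [expand, hSval]
    nlinarith [key', hqpow]
  -- linearity of A in w
  have hlin : ∀ ℓ, 1 ≤ ℓ → ∀ w : ℝ, A ℓ w = w * A ℓ 1 := by
    intro ℓ hℓ
    induction ℓ, hℓ using Nat.le_induction with
    | base => intro w; rw [hA1, hA1]; ring
    | succ n hn ih =>
      intro w
      rw [hAstep (n + 1) (by omega) w, hAstep (n + 1) (by omega) 1]
      simp only [Nat.add_sub_cancel]
      rw [ih w]; ring
  -- positivity
  have hApos : ∀ ℓ, 1 ≤ ℓ → 0 < A ℓ 1 := by
    intro ℓ hℓ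
    induction ℓ, hℓ using Nat.le_induction with
    | base => rw [hA1]; norm_num
    | succ n hn ih =>
      rw [hAstep (n + 1) (by omega) 1]
      simp only [Nat.add_sub_cancel]
      have := Real.exp_pos (-(τ (n + 1) - τ n) / h)
      nlinarith
  -- geometric bound
  have hAbound : ∀ ℓ, 1 ≤ ℓ → ℓ ≤ m → A ℓ 1 ≤ ∑ i ∈ Finset.range ℓ, q ^ i := by
    intro ℓ hℓ
    induction ℓ, hℓ using Nat.le_induction with
    | base => intro _; rw [hA1]; simp
    | succ n hn ih =>
      intro hnm
      rw [hAstep (n + 1) (by omega) 1]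
      simp only [Nat.add_sub_cancel]
      have hδ := hgapmem (n + 1) (by omega) hnm
      simp only [Nat.add_sub_cancel] at hδ
      have he : Real.exp (-(τ (n + 1) - τ n) / h) ≤ q := by
        rw [hq]
        apply Real.exp_le_exp.mpr
        rw [div_le_div_iff₀ hh hh]
        have h5 : -(τ (n + 1) - τ n) ≤ -δmin := by linarith [hδ.1]
        exact mul_le_mul_of_nonneg_right h5 hh.le
      have hmul : Real.exp (-(τ (n + 1) - τ n) / h) * A n 1 ≤
          q * ∑ i ∈ Finset.range n, q ^ i :=
        mul_le_mul he (ih (by omega)) (hApos n hn).le hq0.le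
      have hgeo : (1:ℝ) + q * ∑ i ∈ Finset.range n, q ^ i = ∑ i ∈ Finset.range (n + 1), q ^ i := by
        rw [geom_sum_succ]; ring
      linarith
  have hSle : ∀ ℓ, ℓ ≤ m → (∑ i ∈ Finset.range ℓ, q ^ i) ≤ S := by
    intro ℓ hℓ
    apply Finset.sum_le_sum_of_subset_of_nonneg (Finset.range_subset_range.mpr hℓ)
    intro i _ _
    exact pow_nonneg hq0.le i
  have hemax1 : Real.exp (-δmax / h) ≤ 1 := by
    rw [← Real.exp_zero]
    apply Real.exp_le_exp.mpr
    apply div_nonpos_of_nonpos_of_nonneg <;> linarith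
  -- Part 1
  have part1 : ∀ j, 2 ≤ j → j ≤ m → ∀ w : ℝ, 0 < w → A (j - 1) w < A j w := by
    intro j hj2 hjm w hw
    have hstep := hAstep j hj2 w
    set e : ℝ := Real.exp (-(τ j - τ (j - 1)) / h) with hedef
    have hδj := hgapmem j hj2 hjm
    have he1 : e < 1 := by
      rw [hedef, ← Real.exp_zero]
      apply Real.exp_lt_exp.mpr
      apply div_neg_of_neg_of_pos _ hh
      linarith [hδj.1]
    have heemax : Real.exp (-δmax / h) ≤ e := by
      rw [hedef]
      apply Real.exp_le_exp.mpr
      rw [div_le_div_iff₀ hh hh]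
      have h5 : -δmax ≤ -(τ j - τ (j - 1)) := by linarith [hδj.2]
      exact mul_le_mul_of_nonneg_right h5 hh.le
    have hAb : A (j - 1) w ≤ w * S := by
      rw [hlin (j - 1) (by omega)]
      exact mul_le_mul_of_nonneg_left
        (le_trans (hAbound (j - 1) (by omega) (by omega)) (hSle (j - 1) (by omega))) hw.le
    have hApw : 0 < A (j - 1) w := by
      rw [hlin (j - 1) (by omega)]
      exact mul_pos hw (hApos (j - 1) (by omega))
    have hmul : (1 - e) * A (j - 1) w ≤ (1 - Real.exp (-δmax / h)) * (w * S) :=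
      mul_le_mul (by linarith) hAb hApw.le (by linarith)
    have hfin : (1 - Real.exp (-δmax / h)) * (w * S) < w := by
      calc (1 - Real.exp (-δmax / h)) * (w * S) = w * ((1 - Real.exp (-δmax / h)) * S) := by ring
        _ < w * 1 := mul_lt_mul_of_pos_left hK hw
        _ = w := mul_one w
    have h6 : (1 - e) * A (j - 1) w < w := lt_of_le_of_lt hmul hfin
    rw [hstep]
    rw [sub_mul, one_mul] at h6
    have h7 := sub_lt_iff_lt_add'.mp h6
    rwa [add_comm] at h7
  refine ⟨part1, ?_⟩
  -- monotone chain at w = 1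
  have hmono : ∀ j, 1 ≤ j → ∀ j', j ≤ j' → j' ≤ m → A j 1 ≤ A j' 1 := by
    intro j hj1 j' hjj'
    induction j', hjj' using Nat.le_induction with
    | base => intro _; exact le_refl _
    | succ n hn ih =>
      intro hnm
      have hlt : A n 1 < A (n + 1) 1 := by
        have := part1 (n + 1) (by omega) hnm 1 one_pos
        simpa using this
      exact le_trans (ih (by omega)) hlt.le
  intro k hk1 hkm
  by_cases hk2 : 2 ≤ k
  · have hc' : 0 < A (k - 1) 1 := hApos _ (by omega)
    have hcc : A (k - 1) 1 < A k 1 := part1 k hk2 hkm 1 one_pos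
    have hc : 0 < A k 1 := lt_trans hc' hcc
    have hsum : 0 < A k 1 + A (k - 1) 1 := by linarith
    refine ⟨2 / (A k 1 + A (k - 1) 1), div_pos two_pos hsum, ?_, ?_⟩
    · rw [hlin k (by omega)]
      rw [div_mul_eq_mul_div, lt_div_iff₀ hsum]
      linarith
    · intro j hj1 hjk
      rw [hlin j hj1]
      have hj' : A j 1 ≤ A (k - 1) 1 := hmono j hj1 (k - 1) (by omega) (by omega)
      have hpos : 0 < 2 / (A k 1 + A (k - 1) 1) := div_pos two_pos hsum
      have h2 : 2 / (A k 1 + A (k - 1) 1) * A j 1 ≤ 2 / (A k 1 + A (k - 1) 1) * A (k - 1) 1 :=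
        mul_le_mul_of_nonneg_left hj' hpos.le
      have h3 : 2 / (A k 1 + A (k - 1) 1) * A (k - 1) 1 < 1 := by
        rw [div_mul_eq_mul_div, div_lt_one hsum]
        linarith
      linarith
  · have hk : k = 1 := by omega
    subst hk
    exact ⟨2, by norm_num, by rw [hA1]; norm_num, fun j hj1 hjk => by omega⟩
end

section
/- Identifiability of SNN unit outputs: let I_1, ..., I_d be spike trains and define, for times r ≤ t in the union I = ⋃_j I_j, the vector p^{[r,t]} ∈ ℝ^d with i-th entry ∑_{τ ∈ I_i ∩ [r,t]} e^{−(t−τ)/h}, and let P(I_1,...,I_d) be the set of all such vectors. Let χ(s) = 1(s > 1) − 1(s ≤ 0). If two weight vectors w_1, w_2 ∈ ℝ^d satisfy χ(⟨w_1, p⟩) = χ(⟨w_2, p⟩) for all p ∈ P(I_1,...,I_d), then the two integrate-and-fire neurons with weights w_1 and w_2 produce identical output spike trains on input (I_1, ..., I_d). -/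
/-- The set of contribution vectors `p^{[r,t]}` of input spike trains `I` with
memory coefficient `h`: `p^{[r,t]}_i = ∑_{τ ∈ I_i ∩ [r,t]} e^{−(t−τ)/h}`. -/
noncomputable def contribVectors (d : ℕ) (I : Fin d → Set ℝ) (h : ENNReal) :
    Set (Fin d → ℝ) :=
  {p | ∃ r t : ℝ, r ∈ ⋃ j, I j ∧ t ∈ ⋃ j, I j ∧ r ≤ t ∧
    p = fun i => ∑ᶠ τ ∈ I i ∩ Set.Icc r t, decay h (t - τ)}

/-- `χ(s) = 1(s > 1) − 1(s ≤ 0)`. -/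
noncomputable def chiSign (s : ℝ) : ℤ :=
  (if 1 < s then 1 else 0) - (if s ≤ 0 then 1 else 0)

/-! ### Auxiliary lemmas -/

lemma decay_zero (h : ENNReal) : decay h 0 = 1 := by simp [decay]

lemma decay_pos (h : ENNReal) (Δ : ℝ) : 0 < decay h Δ := Real.exp_pos _

lemma decay_le_one (h : ENNReal) {Δ : ℝ} (hΔ : 0 ≤ Δ) : decay h Δ ≤ 1 := by
  apply Real.exp_le_one_iff.mpr
  simp only [neg_nonpos]
  exact div_nonneg hΔ ENNReal.toReal_nonneg

lemma decay_add (h : ENNReal) (a b : ℝ) : decay h (a + b) = decay h a * decay h b := by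
  unfold decay
  rw [← Real.exp_add]
  congr 1
  rw [add_div]
  ring

lemma chiSign_iffs {a b : ℝ} (hab : chiSign a = chiSign b) :
    (1 < a ↔ 1 < b) ∧ (a ≤ 0 ↔ b ≤ 0) := by
  unfold chiSign at hab
  by_cases h1 : 1 < a <;> by_cases h2 : a ≤ 0 <;> by_cases h3 : 1 < b <;> by_cases h4 : b ≤ 0 <;>
    simp [h1, h2, h3, h4] at hab ⊢ <;> first | tauto | linarith

lemma finsum_mem_const_mul {s : Set ℝ} (hs : s.Finite) (c : ℝ) (f : ℝ → ℝ) :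
    ∑ᶠ τ ∈ s, c * f τ = c * ∑ᶠ τ ∈ s, f τ := by
  rw [← hs.coe_toFinset, finsum_mem_coe_finset, finsum_mem_coe_finset, Finset.mul_sum]

lemma finsum_inter_singleton (A : Set ℝ) (t : ℝ) (f : ℝ → ℝ) :
    ∑ᶠ τ ∈ A ∩ {t}, f τ = Set.indicator A f t := by
  by_cases h : t ∈ A
  · rw [Set.inter_eq_self_of_subset_right (by simpa using h), finsum_mem_singleton,
      Set.indicator_of_mem h]
  · rw [show A ∩ {t} = (∅ : Set ℝ) by
      ext x
      simp only [Set.mem_inter_iff, Set.mem_singleton_iff, Set.mem_empty_iff_false, iff_false,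
        not_and]
      rintro hx rfl
      exact h hx]
    rw [finsum_mem_empty, Set.indicator_of_notMem h]

/-- The "unfolded potential" `⟨w, p^{[r,t]}⟩`. -/
noncomputable def Spot (d : ℕ) (I : Fin d → Set ℝ) (h : ENNReal) (w : Fin d → ℝ)
    (r t : ℝ) : ℝ :=
  ∑ i, w i * ∑ᶠ τ ∈ I i ∩ Set.Icc r t, decay h (t - τ)

lemma Spot_self (d : ℕ) (I : Fin d → Set ℝ) (h : ENNReal) (w : Fin d → ℝ) (t : ℝ) :
    Spot d I h w t t = ∑ j, Set.indicator (I j) (fun _ => w j) t := by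
  unfold Spot
  apply Finset.sum_congr rfl
  intro i _
  rw [Set.Icc_self, finsum_inter_singleton]
  by_cases hti : t ∈ I i
  · rw [Set.indicator_of_mem hti, Set.indicator_of_mem hti, sub_self, decay_zero, mul_one]
  · rw [Set.indicator_of_notMem hti, Set.indicator_of_notMem hti, mul_zero]

lemma Spot_split (d : ℕ) (I : Fin d → Set ℝ) (h : ENNReal) (w : Fin d → ℝ)
    {r t' t : ℝ} (hfin : ∀ i (r t : ℝ), 0 < r → (I i ∩ Set.Icc r t).Finite)
    (hr : 0 < r) (hrt' : r ≤ t') (ht't : t' < t)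
    (hgap : ∀ i, ∀ s ∈ I i, s < t → s ≤ t') :
    Spot d I h w r t = decay h (t - t') * Spot d I h w r t'
      + ∑ j, Set.indicator (I j) (fun _ => w j) t := by
  unfold Spot
  rw [Finset.mul_sum, ← Finset.sum_add_distrib]
  apply Finset.sum_congr rfl
  intro i _
  have hsub : I i ∩ Set.Icc r t = (I i ∩ Set.Icc r t') ∪ (I i ∩ {t}) := by
    ext x
    simp only [Set.mem_inter_iff, Set.mem_Icc, Set.mem_union, Set.mem_singleton_iff]
    constructor
    · rintro ⟨hxI, hrx, hxt⟩
      rcases lt_or_eq_of_le hxt with hlt | rfl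
      · exact Or.inl ⟨hxI, hrx, hgap i x hxI hlt⟩
      · exact Or.inr ⟨hxI, rfl⟩
    · rintro (⟨hxI, hrx, hxt'⟩ | ⟨hxI, rfl⟩)
      · exact ⟨hxI, hrx, le_trans hxt' (le_of_lt ht't)⟩
      · exact ⟨hxI, le_trans hrt' (le_of_lt ht't), le_refl _⟩
  have hd : Disjoint (I i ∩ Set.Icc r t') (I i ∩ {t}) := by
    rw [Set.disjoint_left]
    rintro x ⟨_, _, hx2⟩ ⟨_, hx3⟩
    rw [Set.mem_singleton_iff] at hx3
    subst hx3
    linarith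
  have hfin1 := hfin i r t' hr
  have hfin2 : (I i ∩ ({t} : Set ℝ)).Finite := (Set.finite_singleton t).inter_of_right _
  rw [hsub, finsum_mem_union hd hfin1 hfin2, finsum_inter_singleton, mul_add]
  congr 1
  · rw [show (∑ᶠ τ ∈ I i ∩ Set.Icc r t', decay h (t - τ))
        = ∑ᶠ τ ∈ I i ∩ Set.Icc r t', decay h (t - t') * decay h (t' - τ) from
      finsum_mem_congr rfl (fun τ _ => by rw [← decay_add]; congr 1; ring),
      finsum_mem_const_mul hfin1]
    ring
  · by_cases hti : t ∈ I i
    · rw [Set.indicator_of_mem hti, Set.indicator_of_mem hti, sub_self, decay_zero, mul_one]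
    · rw [Set.indicator_of_notMem hti, Set.indicator_of_notMem hti, mul_zero]

/-- Identifiability of SNN unit outputs: if two weight vectors induce the same
`χ`-pattern on all contribution vectors, then the corresponding
integrate-and-fire neurons produce identical output spike trains. -/
theorem snn_unit_identifiability (d : ℕ) (I : Fin d → Set ℝ)
    (h : ENNReal) (hh : 0 < h)
    (hI : ∀ j, I j ⊆ Set.Ioi 0 ∧ ∀ t > (0 : ℝ), (I j ∩ Set.Icc 0 t).Finite)
    (w₁ w₂ : Fin d → ℝ)
    (hχ : ∀ p ∈ contribVectors d I h,
      chiSign (∑ i, w₁ i * p i) = chiSign (∑ i, w₂ i * p i)) :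
    ∀ P₁ P₂ : ℝ → ℝ, IsPotential d I w₁ h P₁ → IsPotential d I w₂ h P₂ →
      {s : ℝ | 0 < s ∧ 1 < P₁ s} = {s : ℝ | 0 < s ∧ 1 < P₂ s} := by
  intro P₁ P₂ hP₁ hP₂
  set T : Set ℝ := ⋃ j, I j with hT
  have hTpos : T ⊆ Set.Ioi 0 := by
    intro x hx
    obtain ⟨j, hj⟩ := Set.mem_iUnion.mp hx
    exact (hI j).1 hj
  have hfinIcc : ∀ (i : Fin d) (r t : ℝ), 0 < r → (I i ∩ Set.Icc r t).Finite := by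
    intro i r t hr
    by_cases ht : 0 < t
    · apply ((hI i).2 t ht).subset
      rintro x ⟨hx1, hx2, hx3⟩
      exact ⟨hx1, le_of_lt ((hI i).1 hx1), hx3⟩
    · rw [Set.Icc_eq_empty (by intro hcon; exact ht (lt_of_lt_of_le hr hcon)), Set.inter_empty]
      exact Set.finite_empty
  have hfinT : ∀ t : ℝ, (T ∩ Set.Iio t).Finite := by
    intro t
    apply Set.Finite.subset (Set.finite_iUnion (fun j => (hI j).2 (max t 1) (by positivity)))
    rintro x ⟨hx1, hx2⟩
    obtain ⟨j, hj⟩ := Set.mem_iUnion.mp hx1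
    exact Set.mem_iUnion.mpr ⟨j, hj, le_of_lt ((hI j).1 hj),
      le_trans (le_of_lt hx2) (le_max_left t 1)⟩
  have hmemχ : ∀ r t : ℝ, r ∈ T → t ∈ T → r ≤ t →
      chiSign (Spot d I h w₁ r t) = chiSign (Spot d I h w₂ r t) := by
    intro r t hr ht hrt
    have := hχ (fun i => ∑ᶠ τ ∈ I i ∩ Set.Icc r t, decay h (t - τ)) ⟨r, t, hr, ht, hrt, rfl⟩
    simpa [Spot] using this
  -- the potential never exceeds 1 off presynaptic spike times
  have nospike : ∀ (w : Fin d → ℝ) (P : ℝ → ℝ), IsPotential d I w h P →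
      ∀ t : ℝ, 0 < t → t ∉ T → P t ≤ 1 := by
    intro w P hP t ht htT
    have e := hP.2.2 t ht
    rw [← hT] at e
    rw [e]
    have hsum0 : ∑ j, Set.indicator (I j) (fun _ => w j) t = 0 := by
      apply Finset.sum_eq_zero
      intro j _
      exact Set.indicator_of_notMem (fun hj => htT (Set.mem_iUnion.mpr ⟨j, hj⟩)) _
    rw [hsum0, add_zero]
    have hqt : prevTime T t ≤ t :=
      csSup_le ⟨0, Or.inl rfl, ht⟩ (fun x hx => le_of_lt hx.2)
    apply max_le _ zero_le_one
    split_ifs with hq1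
    · rcases le_or_gt (P (prevTime T t)) 0 with h0 | h0
      · exact le_trans (mul_nonpos_of_nonpos_of_nonneg h0 (decay_pos h _).le) zero_le_one
      · calc P (prevTime T t) * decay h (t - prevTime T t)
            ≤ P (prevTime T t) * 1 := by
              exact mul_le_mul_of_nonneg_left (decay_le_one h (sub_nonneg.mpr hqt)) h0.le
          _ ≤ 1 := by rw [mul_one]; exact hq1
    · exact zero_le_one
  -- prevTime at a first spike
  have hprev_base : ∀ t : ℝ, 0 < t → T ∩ Set.Iio t = ∅ → prevTime T t = 0 := by
    intro t ht hempty
    unfold prevTime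
    rw [show ({0} ∪ T) ∩ Set.Iio t = {0} by
      ext x
      simp only [Set.mem_inter_iff, Set.mem_union, Set.mem_singleton_iff, Set.mem_Iio]
      constructor
      · rintro ⟨h1 | h1, h2⟩
        · exact h1
        · exfalso
          rw [Set.eq_empty_iff_forall_notMem] at hempty
          exact hempty x ⟨h1, h2⟩
      · rintro rfl
        exact ⟨Or.inl rfl, ht⟩]
    exact csSup_singleton 0
  -- prevTime at a later spike
  have hprev_step : ∀ t : ℝ, 0 < t → (T ∩ Set.Iio t).Nonempty →
      prevTime T t = sSup (T ∩ Set.Iio t) := by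
    intro t ht hne
    have hfin := hfinT t
    have ht' := hne.csSup_mem hfin
    apply IsGreatest.csSup_eq
    constructor
    · exact ⟨Or.inr ht'.1, ht'.2⟩
    · rintro x ⟨hx1 | hx1, hx2⟩
      · rw [Set.mem_singleton_iff] at hx1
        subst hx1
        exact le_of_lt (hTpos ht'.1)
      · exact le_csSup hfin.bddAbove ⟨hx1, hx2⟩
  -- main induction: unfolded potential formula at spike times
  have main : ∀ n : ℕ, ∀ t, t ∈ T → (T ∩ Set.Iio t).ncard = n →
      ∃ r, r ∈ T ∧ r ≤ t ∧ P₁ t = max (Spot d I h w₁ r t) 0 ∧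
        P₂ t = max (Spot d I h w₂ r t) 0 := by
    intro n
    induction n using Nat.strong_induction_on with
    | _ n ih =>
    intro t htT hn
    have ht : (0 : ℝ) < t := hTpos htT
    have e₁ := hP₁.2.2 t ht
    have e₂ := hP₂.2.2 t ht
    rw [← hT] at e₁ e₂
    rcases Set.eq_empty_or_nonempty (T ∩ Set.Iio t) with hm | hm
    · -- first spike
      rw [hprev_base t ht hm, hP₁.2.1, if_pos (by norm_num), zero_mul, zero_add] at e₁
      rw [hprev_base t ht hm, hP₂.2.1, if_pos (by norm_num), zero_mul, zero_add] at e₂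
      exact ⟨t, htT, le_refl t, by rw [Spot_self]; exact e₁, by rw [Spot_self]; exact e₂⟩
    · -- there is a previous spike t'
      set t' := sSup (T ∩ Set.Iio t) with ht'def
      have hfin := hfinT t
      have ht'mem : t' ∈ T ∩ Set.Iio t := hm.csSup_mem hfin
      have hq := hprev_step t ht hm
      rw [hq] at e₁ e₂
      have hgap : ∀ i, ∀ s ∈ I i, s < t → s ≤ t' := by
        intro i s hs hst
        exact le_csSup hfin.bddAbove ⟨Set.mem_iUnion.mpr ⟨i, hs⟩, hst⟩
      have hcard : (T ∩ Set.Iio t').ncard < n := by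
        rw [← hn]
        apply Set.ncard_lt_ncard _ hfin
        constructor
        · rintro x ⟨hx1, hx2⟩
          exact ⟨hx1, Set.mem_Iio.mpr (lt_trans (Set.mem_Iio.mp hx2) (Set.mem_Iio.mp ht'mem.2))⟩
        · intro hsub
          exact absurd (hsub ht'mem).2 (lt_irrefl t')
      obtain ⟨r, hrT, hrt', f₁, f₂⟩ := ih _ hcard t' ht'mem.1 rfl
      have hr0 : (0 : ℝ) < r := hTpos hrT
      have hiff := chiSign_iffs (hmemχ r t' hrT ht'mem.1 hrt')
      by_cases h1 : 1 < Spot d I h w₁ r t'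
      · -- both potentials spiked at t', reset
        have h1' : 1 < Spot d I h w₂ r t' := hiff.1.mp h1
        have hn1 : ¬ P₁ t' ≤ 1 := by
          rw [f₁]; exact not_le.mpr (lt_max_iff.mpr (Or.inl h1))
        have hn2 : ¬ P₂ t' ≤ 1 := by
          rw [f₂]; exact not_le.mpr (lt_max_iff.mpr (Or.inl h1'))
        rw [if_neg hn1, zero_add] at e₁
        rw [if_neg hn2, zero_add] at e₂
        exact ⟨t, htT, le_refl t, by rw [Spot_self]; exact e₁, by rw [Spot_self]; exact e₂⟩
      · have h1' : ¬ 1 < Spot d I h w₂ r t' := fun hc => h1 (hiff.1.mpr hc)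
        have hl1 : P₁ t' ≤ 1 := by rw [f₁]; exact max_le (not_lt.mp h1) zero_le_one
        have hl2 : P₂ t' ≤ 1 := by rw [f₂]; exact max_le (not_lt.mp h1') zero_le_one
        rw [if_pos hl1] at e₁
        rw [if_pos hl2] at e₂
        by_cases h0 : Spot d I h w₁ r t' ≤ 0
        · -- both potentials at 0 at t'
          have h0' : Spot d I h w₂ r t' ≤ 0 := hiff.2.mp h0
          have hz1 : P₁ t' = 0 := by rw [f₁]; exact max_eq_right h0
          have hz2 : P₂ t' = 0 := by rw [f₂]; exact max_eq_right h0'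
          rw [hz1, zero_mul, zero_add] at e₁
          rw [hz2, zero_mul, zero_add] at e₂
          exact ⟨t, htT, le_refl t, by rw [Spot_self]; exact e₁, by rw [Spot_self]; exact e₂⟩
        · -- both potentials strictly between 0 and 1: decay and accumulate
          have h0' : ¬ Spot d I h w₂ r t' ≤ 0 := fun hc => h0 (hiff.2.mpr hc)
          have hv1 : P₁ t' = Spot d I h w₁ r t' := by
            rw [f₁]; exact max_eq_left (le_of_lt (not_le.mp h0))
          have hv2 : P₂ t' = Spot d I h w₂ r t' := by
            rw [f₂]; exact max_eq_left (le_of_lt (not_le.mp h0'))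
          rw [hv1] at e₁
          rw [hv2] at e₂
          refine ⟨r, hrT, le_trans hrt' (le_of_lt ht'mem.2), ?_, ?_⟩
          · rw [Spot_split d I h w₁ hfinIcc hr0 hrt' ht'mem.2 hgap, e₁, mul_comm]
          · rw [Spot_split d I h w₂ hfinIcc hr0 hrt' ht'mem.2 hgap, e₂, mul_comm]
  -- conclusion
  have key : ∀ s : ℝ, 0 < s → (1 < P₁ s ↔ 1 < P₂ s) := by
    intro s hs
    by_cases hsT : s ∈ T
    · obtain ⟨r, hrT, hrs, f₁, f₂⟩ := main _ s hsT rfl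
      have hiff := chiSign_iffs (hmemχ r s hrT hsT hrs)
      rw [f₁, f₂]
      constructor
      · intro hlt
        have := Or.resolve_right (lt_max_iff.mp hlt) (by norm_num)
        exact lt_max_iff.mpr (Or.inl (hiff.1.mp this))
      · intro hlt
        have := Or.resolve_right (lt_max_iff.mp hlt) (by norm_num)
        exact lt_max_iff.mpr (Or.inl (hiff.1.mpr this))
    · constructor
      · intro hlt
        exact absurd hlt (not_lt.mpr (nospike w₁ P₁ hP₁ s hs hsT))
      · intro hlt
        exact absurd hlt (not_lt.mpr (nospike w₂ P₂ hP₂ s hs hsT))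
  ext s
  simp only [Set.mem_setOf_eq]
  constructor
  · rintro ⟨hs, hPs⟩
    exact ⟨hs, (key s hs).mp hPs⟩
  · rintro ⟨hs, hPs⟩
    exact ⟨hs, (key s hs).mpr hPs⟩
end
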